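/- For every n ≥ 1 and every abelian group B of order n, there exists a finite irreducible subgroup H of SL(n,ℂ) such that Z_n(H) is isomorphic as a group to B × B. -/

import Mathlib

open Matrix

noncomputable section

abbrev SLC (n : ℕ) : Type := Matrix.SpecialLinearGroup (Fin n) ℂ

def xi (n : ℕ) : ℂ := Complex.exp (2 * Real.pi * Complex.I / n)

lemma xi_pow_self (n : ℕ) (hn : n ≠ 0) : xi n ^ n = 1 := by
  have h : (n : ℂ) ≠ 0 := Nat.cast_ne_zero.mpr hn
  have h2 : (n : ℂ) * (2 * Real.pi * Complex.I / n) = 2 * Real.pi * Complex.I := by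
    field_simp
  simp only [xi]
  rw [← Complex.exp_nat_mul, h2, Complex.exp_two_pi_mul_I]

def xiSL (n : ℕ) : SLC n :=
  if hn : n = 0 then 1 else
    ⟨xi n • (1 : Matrix (Fin n) (Fin n) ℂ), by
      rw [Matrix.det_smul, Matrix.det_one, Fintype.card_fin, mul_one, xi_pow_self n hn]⟩

lemma xiSL_mem_center (n : ℕ) : xiSL n ∈ Subgroup.center (SLC n) := by
  rw [Subgroup.mem_center_iff]
  intro g
  by_cases hn : n = 0
  · rw [show xiSL n = 1 from dif_pos hn]
    simp
  · have hx : ((xiSL n : SLC n) : Matrix (Fin n) (Fin n) ℂ) = xi n • 1 :=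
      congrArg (fun x : SLC n => (x : Matrix (Fin n) (Fin n) ℂ)) (dif_neg hn)
    apply Subtype.ext
    simp only [Matrix.SpecialLinearGroup.coe_mul]
    rw [hx, mul_smul_comm, smul_mul_assoc, mul_one, one_mul]

def centerSL (n : ℕ) : Subgroup (SLC n) := Subgroup.zpowers (xiSL n)

instance centerSL_normal (n : ℕ) : (centerSL n).Normal := by
  constructor
  intro x hx g
  have hc : g * x = x * g :=
    Subgroup.mem_center_iff.mp ((Subgroup.zpowers_le.mpr (xiSL_mem_center n)) hx) g
  have h : g * x * g⁻¹ = x := by rw [hc, mul_inv_cancel_right]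
  rwa [h]

abbrev PSLC (n : ℕ) : Type := SLC n ⧸ centerSL n

def pin (n : ℕ) : SLC n →* PSLC n := QuotientGroup.mk' (centerSL n)

def IsIrreducibleSL (n : ℕ) (H : Subgroup (SLC n)) : Prop :=
  ∀ W : Submodule ℂ (Fin n → ℂ),
    (∀ h ∈ H, ∀ v ∈ W, Matrix.mulVec (h : Matrix (Fin n) (Fin n) ℂ) v ∈ W) →
      W = ⊥ ∨ W = ⊤

def Zc (n : ℕ) (H : Subgroup (SLC n)) : Subgroup (PSLC n) :=
  Subgroup.centralizer ((H.map (pin n) : Subgroup (PSLC n)) : Set (PSLC n))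

def Un (n : ℕ) (H : Subgroup (SLC n)) : Subgroup (SLC n) :=
  (Zc n H).comap (pin n)

def IsIrreduciblePSL (n : ℕ) (K : Subgroup (PSLC n)) : Prop :=
  IsIrreducibleSL n (K.comap (pin n))

def ConjSub {G : Type*} [Group G] (A B : Subgroup G) : Prop :=
  ∃ g : G, A.map (MulAut.conj g).toMonoidHom = B
set_option linter.unusedSectionVars false

namespace Prop34

variable {n : ℕ} {B : Type*} [CommGroup B] [Fintype B] [DecidableEq B]

def P (e : Fin n ≃ B) (b : B) : Matrix (Fin n) (Fin n) ℂ :=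
  Matrix.of fun i j => if e i = b * e j then 1 else 0

def M (e : Fin n ≃ B) (χ : B →* ℂˣ) : Matrix (Fin n) (Fin n) ℂ :=
  Matrix.diagonal fun i => (χ (e i) : ℂ)

variable (e : Fin n ≃ B)

include e in
lemma npos : 0 < n := (e.symm 1).pos

lemma P_one : P e 1 = 1 := by
  ext i j
  simp only [P, Matrix.of_apply, one_mul, Matrix.one_apply, EmbeddingLike.apply_eq_iff_eq]

lemma M_one : M e 1 = 1 := by
  simp [M, Matrix.diagonal_one]

lemma P_mul (b b' : B) : P e b * P e b' = P e (b * b') := by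
  ext i j
  simp only [P, Matrix.mul_apply, Matrix.of_apply]
  rw [Finset.sum_eq_single (e.symm (b' * e j))]
  · simp [mul_assoc]
  · intro k _ hk
    have h2 : ¬ (e k = b' * e j) := fun h => hk (by rw [← h, e.symm_apply_apply])
    simp [h2]
  · simp

lemma M_mul (χ χ' : B →* ℂˣ) : M e χ * M e χ' = M e (χ * χ') := by
  simp [M, Matrix.diagonal_mul_diagonal]

lemma M_mul_P (χ : B →* ℂˣ) (b : B) :
    M e χ * P e b = (χ b : ℂ) • (P e b * M e χ) := by
  ext i j
  simp only [M, P, Matrix.smul_apply, Matrix.diagonal_mul, Matrix.mul_diagonal,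
    Matrix.of_apply, smul_eq_mul]
  by_cases h : e i = b * e j
  · rw [h]
    simp only [if_true, _root_.map_mul, Units.val_mul, mul_one]
    ring
  · simp [h]

/-- The fundamental product formula. -/
lemma key_mul (c c' : ℂ) (b b' : B) (χ χ' : B →* ℂˣ) :
    (c • (P e b * M e χ)) * (c' • (P e b' * M e χ')) =
      (c * c' * (χ b' : ℂ)) • (P e (b * b') * M e (χ * χ')) := by
  rw [smul_mul_smul_comm]
  rw [show P e b * M e χ * (P e b' * M e χ') = P e b * (M e χ * P e b') * M e χ' by
    noncomm_ring]
  rw [M_mul_P]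
  rw [mul_smul_comm, smul_mul_assoc, smul_smul]
  rw [show P e b * (P e b' * M e χ) * M e χ' = (P e b * P e b') * (M e χ * M e χ') by
    noncomm_ring]
  rw [P_mul, M_mul, mul_comm c c', mul_assoc]

lemma entry_eq (c : ℂ) (b : B) (χ : B →* ℂˣ) (i j : Fin n) :
    (c • (P e b * M e χ)) i j = if e i = b * e j then c * (χ (e j) : ℂ) else 0 := by
  simp only [Matrix.smul_apply, P, M, Matrix.mul_diagonal, Matrix.of_apply, smul_eq_mul]
  by_cases h : e i = b * e j <;> simp [h]

lemma PM_isUnit (b : B) (χ : B →* ℂˣ) : IsUnit (P e b * M e χ) := by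
  have h1 : (P e b * M e χ) * (M e χ⁻¹ * P e b⁻¹) = 1 := by
    rw [show (P e b * M e χ) * (M e χ⁻¹ * P e b⁻¹)
        = P e b * (M e χ * M e χ⁻¹) * P e b⁻¹ by noncomm_ring]
    have h0 : χ * χ⁻¹ = 1 := mul_inv_cancel χ
    rw [M_mul, h0, M_one, mul_one, P_mul, mul_inv_cancel, P_one]
  exact ⟨⟨_, _, h1, mul_eq_one_comm.mp h1⟩, rfl⟩

lemma det_PM_ne_zero (b : B) (χ : B →* ℂˣ) : (P e b * M e χ).det ≠ 0 := by
  have := (Matrix.isUnit_iff_isUnit_det _).mp (PM_isUnit e b χ)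
  exact this.ne_zero

include e in
/-- Scalar coefficient of an element of `SL(n, ℂ)` is nonzero. -/
lemma coeff_ne_zero {g : SLC n} {c : ℂ} {A : Matrix (Fin n) (Fin n) ℂ}
    (h : (g : Matrix (Fin n) (Fin n) ℂ) = c • A) : c ≠ 0 := by
  intro hc
  have hdet : ((g : Matrix (Fin n) (Fin n) ℂ)).det = 1 := g.2
  rw [h, hc, Matrix.det_smul, Fintype.card_fin, zero_pow (npos e).ne', zero_mul] at hdet
  exact one_ne_zero hdet.symm

/-- The Heisenberg-type subgroup of `SL(n, ℂ)`. -/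
def HS (e : Fin n ≃ B) : Subgroup (SLC n) where
  carrier := {g | ∃ (c : ℂ) (b : B) (χ : B →* ℂˣ),
    (g : Matrix (Fin n) (Fin n) ℂ) = c • (P e b * M e χ)}
  one_mem' := ⟨1, 1, 1, by rw [P_one, M_one, one_smul, mul_one]; rfl⟩
  mul_mem' := by
    rintro g g' ⟨c, b, χ, h⟩ ⟨c', b', χ', h'⟩
    exact ⟨c * c' * (χ b' : ℂ), b * b', χ * χ', by
      rw [Matrix.SpecialLinearGroup.coe_mul, h, h', key_mul]⟩
  inv_mem' := by
    rintro g ⟨c, b, χ, h⟩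
    have hc : c ≠ 0 := coeff_ne_zero e h
    refine ⟨c⁻¹ * (χ b : ℂ), b⁻¹, χ⁻¹, ?_⟩
    have h1 : (g : Matrix (Fin n) (Fin n) ℂ) *
        ((c⁻¹ * (χ b : ℂ)) • (P e b⁻¹ * M e χ⁻¹)) = 1 := by
      have h0 : χ * χ⁻¹ = 1 := mul_inv_cancel χ
      rw [h, key_mul, mul_inv_cancel, h0, P_one, M_one, mul_one]
      have : c * (c⁻¹ * (χ b : ℂ)) * ((χ b⁻¹ : ℂ)) = 1 := by
        rw [map_inv]
        field_simp
        exact Units.mul_inv _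
      rw [this, one_smul]
    calc ((g⁻¹ : SLC n) : Matrix (Fin n) (Fin n) ℂ)
        = ((g⁻¹ : SLC n) : Matrix (Fin n) (Fin n) ℂ) *
          ((g : Matrix (Fin n) (Fin n) ℂ) *
            ((c⁻¹ * (χ b : ℂ)) • (P e b⁻¹ * M e χ⁻¹))) := by rw [h1, mul_one]
      _ = (((g⁻¹ * g : SLC n)) : Matrix (Fin n) (Fin n) ℂ) *
            ((c⁻¹ * (χ b : ℂ)) • (P e b⁻¹ * M e χ⁻¹)) := by
          rw [Matrix.SpecialLinearGroup.coe_mul, mul_assoc]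
      _ = (c⁻¹ * (χ b : ℂ)) • (P e b⁻¹ * M e χ⁻¹) := by
          rw [inv_mul_cancel]
          simp

lemma mem_HS_iff {g : SLC n} : g ∈ HS e ↔ ∃ (c : ℂ) (b : B) (χ : B →* ℂˣ),
    (g : Matrix (Fin n) (Fin n) ℂ) = c • (P e b * M e χ) := Iff.rfl

/-- Uniqueness of the representation. -/
lemma rep_unique {c c' : ℂ} {b b' : B} {χ χ' : B →* ℂˣ} (hc : c ≠ 0)
    (h : c • (P e b * M e χ) = c' • (P e b' * M e χ')) : c = c' ∧ b = b' ∧ χ = χ' := by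
  have key : ∀ x : B, (if (b * x : B) = b * x then c * (χ x : ℂ) else 0) =
      (if (b * x : B) = b' * x then c' * (χ' x : ℂ) else 0) := by
    intro x
    have := congrFun (congrFun h (e.symm (b * x))) (e.symm x)
    rwa [entry_eq, entry_eq, e.apply_symm_apply, e.apply_symm_apply] at this
  have hbb : b = b' := by
    have h1 := key 1
    simp only [mul_one, _root_.map_one, Units.val_one, eq_self_iff_true, if_true] at h1
    by_contra hne
    rw [if_neg hne] at h1
    exact hc h1
  subst hbb
  have hcc : ∀ x : B, c * (χ x : ℂ) = c' * (χ' x : ℂ) := by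
    intro x
    have h1 := key x
    rw [if_pos rfl, if_pos rfl] at h1
    exact h1
  have hc' : c = c' := by
    have h1 := hcc 1
    simpa using h1
  subst hc'
  refine ⟨rfl, rfl, ?_⟩
  ext x
  exact mul_left_cancel₀ hc (hcc x)

lemma inv_coe_eq {n : ℕ} {g : SLC n} {X : Matrix (Fin n) (Fin n) ℂ}
    (h : (g : Matrix (Fin n) (Fin n) ℂ) * X = 1) :
    ((g⁻¹ : SLC n) : Matrix (Fin n) (Fin n) ℂ) = X := by
  calc ((g⁻¹ : SLC n) : Matrix (Fin n) (Fin n) ℂ)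
      = ((g⁻¹ : SLC n) : Matrix (Fin n) (Fin n) ℂ) *
        ((g : Matrix (Fin n) (Fin n) ℂ) * X) := by rw [h, mul_one]
    _ = ((g⁻¹ * g : SLC n) : Matrix (Fin n) (Fin n) ℂ) * X := by
        rw [Matrix.SpecialLinearGroup.coe_mul, mul_assoc]
    _ = X := by rw [inv_mul_cancel]; simp

/-- The group of scalar matrices in `SL(n, ℂ)`. -/
def scalarSub (n : ℕ) : Subgroup (SLC n) where
  carrier := {g | ∃ c : ℂ, (g : Matrix (Fin n) (Fin n) ℂ) = c • 1}
  one_mem' := ⟨1, by simp⟩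
  mul_mem' := by
    rintro g g' ⟨c, hc⟩ ⟨c', hc'⟩
    exact ⟨c * c', by
      rw [Matrix.SpecialLinearGroup.coe_mul, hc, hc', smul_mul_smul_comm, one_mul]⟩
  inv_mem' := by
    rintro g ⟨c, hc⟩
    by_cases hc0 : c = 0
    · refine ⟨0, ?_⟩
      have h1 : ((g⁻¹ : SLC n) : Matrix (Fin n) (Fin n) ℂ) *
          (g : Matrix (Fin n) (Fin n) ℂ) = 1 := by
        rw [← Matrix.SpecialLinearGroup.coe_mul, inv_mul_cancel]; simp
      rw [hc, hc0, zero_smul, mul_zero] at h1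
      calc ((g⁻¹ : SLC n) : Matrix (Fin n) (Fin n) ℂ)
          = ((g⁻¹ : SLC n) : Matrix (Fin n) (Fin n) ℂ) * 1 := (mul_one _).symm
        _ = ((g⁻¹ : SLC n) : Matrix (Fin n) (Fin n) ℂ) * 0 := by rw [← h1]
        _ = (0 : ℂ) • 1 := by simp
    · refine ⟨c⁻¹, inv_coe_eq ?_⟩
      rw [hc, smul_mul_smul_comm, one_mul, mul_inv_cancel₀ hc0, one_smul]

lemma xiSL_coe {n : ℕ} (hn : n ≠ 0) :
    ((xiSL n : SLC n) : Matrix (Fin n) (Fin n) ℂ) = xi n • 1 := by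
  exact congrArg (fun x : SLC n => (x : Matrix (Fin n) (Fin n) ℂ)) (dif_neg hn)

lemma xiSL_pow_coe {n : ℕ} (hn : n ≠ 0) (k : ℕ) :
    (((xiSL n) ^ k : SLC n) : Matrix (Fin n) (Fin n) ℂ) = (xi n) ^ k • 1 := by
  induction k with
  | zero => simp
  | succ k ih =>
      rw [pow_succ, Matrix.SpecialLinearGroup.coe_mul, ih, xiSL_coe hn,
        smul_mul_smul_comm, one_mul, pow_succ]

lemma mem_centerSL_iff {n : ℕ} (hn : n ≠ 0) {g : SLC n} :
    g ∈ centerSL n ↔ ∃ c : ℂ, (g : Matrix (Fin n) (Fin n) ℂ) = c • 1 := by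
  constructor
  · intro hg
    have hle : centerSL n ≤ scalarSub n := by
      rw [centerSL, Subgroup.zpowers_le]
      exact ⟨xi n, xiSL_coe hn⟩
    exact hle hg
  · rintro ⟨c, hc⟩
    have hcn : c ^ n = 1 := by
      have hdet := g.2
      rw [hc, Matrix.det_smul, Matrix.det_one, Fintype.card_fin, mul_one] at hdet
      exact hdet
    haveI : NeZero n := ⟨hn⟩
    obtain ⟨k, _, hkc⟩ := (Complex.isPrimitiveRoot_exp n hn).eq_pow_of_pow_eq_one hcn
    have hg : g = (xiSL n) ^ k := by
      apply Subtype.ext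
      rw [xiSL_pow_coe hn, hc]
      congr 1
      rw [← hkc]
      rfl
    rw [hg, centerSL]
    exact ⟨(k : ℤ), by simp⟩

/-- The pair `(b, χ)` attached to an element of `HS e`. -/
noncomputable def rep (h : HS e) : B × (B →* ℂˣ) :=
  ⟨Classical.choose (Classical.choose_spec ((mem_HS_iff e).mp h.2)),
   Classical.choose (Classical.choose_spec (Classical.choose_spec ((mem_HS_iff e).mp h.2)))⟩

lemma rep_spec (h : HS e) : ∃ c : ℂ, ((h : SLC n) : Matrix (Fin n) (Fin n) ℂ)
    = c • (P e (rep e h).1 * M e (rep e h).2) :=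
  ⟨Classical.choose ((mem_HS_iff e).mp h.2),
    Classical.choose_spec (Classical.choose_spec
      (Classical.choose_spec ((mem_HS_iff e).mp h.2)))⟩

lemma rep_eq (h : HS e) {c : ℂ} {b : B} {χ : B →* ℂˣ}
    (hh : ((h : SLC n) : Matrix (Fin n) (Fin n) ℂ) = c • (P e b * M e χ)) :
    rep e h = (b, χ) := by
  obtain ⟨c0, hc0⟩ := rep_spec e h
  have hc : c0 ≠ 0 := coeff_ne_zero e hc0
  obtain ⟨h1, h2, h3⟩ := rep_unique e hc (hc0.symm.trans hh)
  exact Prod.ext h2 h3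

/-- The projection `HS e →* B × (B →* ℂˣ)`. -/
noncomputable def repHom (e : Fin n ≃ B) : HS e →* B × (B →* ℂˣ) where
  toFun h := rep e h
  map_one' := rep_eq e 1 (by
    rw [P_one, M_one, one_mul, one_smul]
    rfl)
  map_mul' h h' := by
    obtain ⟨c, hc⟩ := rep_spec e h
    obtain ⟨c', hc'⟩ := rep_spec e h'
    have hh : (((h * h' : HS e) : SLC n) : Matrix (Fin n) (Fin n) ℂ) =
        (c * c' * (((rep e h).2) (rep e h').1 : ℂ)) •
          (P e ((rep e h).1 * (rep e h').1) * M e ((rep e h).2 * (rep e h').2)) := by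
      rw [Subgroup.coe_mul, Matrix.SpecialLinearGroup.coe_mul, hc, hc', key_mul]
    exact rep_eq e _ hh

lemma repHom_surjective : Function.Surjective (repHom e) := by
  rintro ⟨b, χ⟩
  obtain ⟨c, hcpow⟩ := IsAlgClosed.exists_pow_nat_eq ((P e b * M e χ).det)⁻¹ (npos e)
  have hdet : (c • (P e b * M e χ)).det = 1 := by
    rw [Matrix.det_smul, Fintype.card_fin, hcpow, inv_mul_cancel₀ (det_PM_ne_zero e b χ)]
  exact ⟨⟨⟨c • (P e b * M e χ), hdet⟩, ⟨c, b, χ, rfl⟩⟩, rep_eq e _ rfl⟩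

lemma repHom_eq_one_iff (h : HS e) : repHom e h = 1 ↔
    ∃ c : ℂ, ((h : SLC n) : Matrix (Fin n) (Fin n) ℂ) = c • 1 := by
  constructor
  · intro h1
    obtain ⟨c, hc⟩ := rep_spec e h
    refine ⟨c, ?_⟩
    have : rep e h = ((1 : B), (1 : B →* ℂˣ)) := h1
    rw [this] at hc
    rwa [P_one, M_one, one_mul] at hc
  · rintro ⟨c, hc⟩
    have hh : ((h : SLC n) : Matrix (Fin n) (Fin n) ℂ) = c • (P e 1 * M e 1) := by
      rwa [P_one, M_one, one_mul]
    show rep e h = 1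
    rw [rep_eq e h hh]
    rfl


section Duality

lemma enoughRoots (B : Type*) [CommGroup B] [Finite B] :
    HasEnoughRootsOfUnity ℂ (Monoid.exponent B) := by
  haveI : NeZero ((Monoid.exponent B : ℂ)) :=
    ⟨Nat.cast_ne_zero.mpr Monoid.exponent_ne_zero_of_finite⟩
  infer_instance

variable {B : Type*} [CommGroup B] [Finite B]

lemma sep {x y : B} (h : ∀ χ : B →* ℂˣ, χ x = χ y) : x = y := by
  haveI := enoughRoots B
  by_contra hne
  have hxy : x * y⁻¹ ≠ 1 := fun h1 => hne (by
    rw [mul_inv_eq_one] at h1; exact h1)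
  obtain ⟨χ, hχ⟩ := CommGroup.exists_apply_ne_one_of_hasEnoughRootsOfUnity B ℂ hxy
  apply hχ
  rw [_root_.map_mul, map_inv, h χ, mul_inv_cancel]

lemma dualEquiv (B : Type*) [CommGroup B] [Finite B] : Nonempty ((B →* ℂˣ) ≃* B) := by
  haveI := enoughRoots B
  exact CommGroup.monoidHom_mulEquiv_of_hasEnoughRootsOfUnity B ℂ

lemma finiteDual (B : Type*) [CommGroup B] [Finite B] : Finite (B →* ℂˣ) := by
  obtain ⟨f⟩ := dualEquiv B
  exact Finite.of_equiv B f.symm.toEquiv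

lemma sum_char [Fintype (B →* ℂˣ)] {x : B} (hx : x ≠ 1) :
    ∑ χ : B →* ℂˣ, (χ x : ℂ) = 0 := by
  haveI := enoughRoots B
  obtain ⟨χ₁, hχ₁⟩ := CommGroup.exists_apply_ne_one_of_hasEnoughRootsOfUnity B ℂ hx
  have key : ∑ χ : B →* ℂˣ, (((χ₁ * χ) x : ℂˣ) : ℂ) = ∑ χ : B →* ℂˣ, (χ x : ℂ) :=
    Fintype.sum_equiv (Equiv.mulLeft χ₁) _ _ (fun χ => rfl)
  have expand : ∀ χ : B →* ℂˣ, (((χ₁ * χ) x : ℂˣ) : ℂ) = (χ₁ x : ℂ) * (χ x : ℂ) :=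
    fun χ => rfl
  rw [Finset.sum_congr rfl (fun χ _ => expand χ), ← Finset.mul_sum] at key
  have h1 : ((χ₁ x : ℂ) - 1) * ∑ χ : B →* ℂˣ, (χ x : ℂ) = 0 := by
    rw [sub_mul, one_mul, key, sub_self]
  rcases mul_eq_zero.mp h1 with h | h
  · exfalso
    apply hχ₁
    apply Units.ext
    rw [sub_eq_zero] at h
    exact h
  · exact h

end Duality

lemma M_mulVec (χ : B →* ℂˣ) (v : Fin n → ℂ) (i : Fin n) :
    (M e χ).mulVec v i = (χ (e i) : ℂ) * v i := by
  simp [M, Matrix.mulVec_diagonal]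

lemma P_mulVec (b : B) (v : Fin n → ℂ) (i : Fin n) :
    (P e b).mulVec v i = v (e.symm (b⁻¹ * e i)) := by
  simp only [P, Matrix.mulVec, dotProduct, Matrix.of_apply]
  rw [Finset.sum_eq_single (e.symm (b⁻¹ * e i))]
  · rw [if_pos (by rw [e.apply_symm_apply, mul_inv_cancel_left]), one_mul]
  · intro k _ hk
    rw [if_neg, zero_mul]
    intro hcon
    exact hk (by rw [hcon, inv_mul_cancel_left, e.symm_apply_apply])
  · simp

lemma W_invariant {W : Submodule ℂ (Fin n → ℂ)}
    (hW : ∀ h ∈ HS e, ∀ v ∈ W, Matrix.mulVec (h : Matrix (Fin n) (Fin n) ℂ) v ∈ W)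
    (b : B) (χ : B →* ℂˣ) {v : Fin n → ℂ} (hv : v ∈ W) :
    (P e b * M e χ).mulVec v ∈ W := by
  obtain ⟨c, hcpow⟩ := IsAlgClosed.exists_pow_nat_eq ((P e b * M e χ).det)⁻¹ (npos e)
  have hdet : (c • (P e b * M e χ)).det = 1 := by
    rw [Matrix.det_smul, Fintype.card_fin, hcpow, inv_mul_cancel₀ (det_PM_ne_zero e b χ)]
  have hc0 : c ≠ 0 := coeff_ne_zero e (g := ⟨_, hdet⟩) rfl
  have h1 := hW ⟨c • (P e b * M e χ), hdet⟩ ⟨c, b, χ, rfl⟩ v hv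
  rw [show ((⟨c • (P e b * M e χ), hdet⟩ : SLC n) : Matrix (Fin n) (Fin n) ℂ).mulVec v
      = c • (P e b * M e χ).mulVec v from Matrix.smul_mulVec c _ v] at h1
  have h2 := W.smul_mem c⁻¹ h1
  rwa [inv_smul_smul₀ hc0] at h2

lemma HS_irreducible : IsIrreducibleSL n (HS e) := by
  intro W hW
  by_cases hbot : W = ⊥
  · exact Or.inl hbot
  right
  haveI := finiteDual B
  haveI := Fintype.ofFinite (B →* ℂˣ)
  obtain ⟨v, hvW, hv0⟩ := (Submodule.ne_bot_iff W).mp hbot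
  obtain ⟨i₀, hvi₀⟩ : ∃ i, v i ≠ 0 := by
    by_contra hcon
    push_neg at hcon
    exact hv0 (funext hcon)
  set w : Fin n → ℂ := ∑ χ : B →* ℂˣ, ((χ (e i₀) : ℂ))⁻¹ • (M e χ).mulVec v with hw
  have hwW : w ∈ W := Submodule.sum_mem _ (fun χ _ => W.smul_mem _ (by
      have h1 := W_invariant e hW 1 χ hvW
      rwa [P_one, one_mul] at h1))
  have hwval : ∀ i, w i = (∑ χ : B →* ℂˣ, (χ ((e i₀)⁻¹ * e i) : ℂ)) * v i := by
    intro i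
    rw [hw]
    simp only [Finset.sum_apply, Pi.smul_apply, smul_eq_mul, M_mulVec]
    rw [Finset.sum_mul]
    apply Finset.sum_congr rfl
    intro χ _
    rw [_root_.map_mul, map_inv, Units.val_mul, Units.val_inv_eq_inv_val]
    ring
  have hsingle : Pi.single i₀ (1 : ℂ) ∈ W := by
    have hcard : ((Fintype.card (B →* ℂˣ) : ℂ)) ≠ 0 := Nat.cast_ne_zero.mpr Fintype.card_ne_zero
    have hs : ((Fintype.card (B →* ℂˣ) : ℂ) * v i₀) ≠ 0 := mul_ne_zero hcard hvi₀
    have hps : Pi.single i₀ (1 : ℂ) = ((Fintype.card (B →* ℂˣ) : ℂ) * v i₀)⁻¹ • w := by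
      funext i
      by_cases hi : i = i₀
      · subst hi
        rw [Pi.single_eq_same]
        simp only [Pi.smul_apply, smul_eq_mul]
        rw [hwval, inv_mul_cancel]
        simp only [_root_.map_one, Units.val_one]
        rw [Finset.sum_const, Finset.card_univ, nsmul_eq_mul, mul_one]
        field_simp
      · rw [Pi.single_eq_of_ne hi]
        simp only [Pi.smul_apply, smul_eq_mul]
        rw [hwval, sum_char (x := (e i₀)⁻¹ * e i) (fun hcon => hi (e.injective (by
          rw [inv_mul_eq_one] at hcon
          exact hcon.symm))), zero_mul, mul_zero]
    rw [hps]
    exact W.smul_mem _ hwW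
  have hall : ∀ i : Fin n, Pi.single i (1 : ℂ) ∈ W := by
    intro i
    have h1 := W_invariant e hW (e i * (e i₀)⁻¹) 1 hsingle
    rw [M_one, mul_one] at h1
    have h2 : (P e (e i * (e i₀)⁻¹)).mulVec (Pi.single i₀ 1) = Pi.single i (1 : ℂ) := by
      funext i'
      rw [P_mulVec, Pi.single_apply, Pi.single_apply]
      have hiff : (e.symm ((e i * (e i₀)⁻¹)⁻¹ * e i') = i₀) ↔ (i' = i) := by
        rw [Equiv.symm_apply_eq]
        constructor
        · intro h
          apply e.injective
          have h3 := congrArg (fun z => (e i * (e i₀)⁻¹) * z) h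
          simpa [mul_assoc, mul_inv_cancel_left] using h3
        · intro h
          subst h
          group
      by_cases h : i' = i
      · rw [if_pos h, if_pos (hiff.mpr h)]
      · rw [if_neg h, if_neg (fun hcon => h (hiff.mp hcon))]
    rwa [h2] at h1
  rw [Submodule.eq_top_iff']
  intro u
  have hu : u = ∑ i : Fin n, u i • (Pi.single i (1 : ℂ) : Fin n → ℂ) := by
    funext j
    rw [Finset.sum_apply]
    simp [Pi.single_apply]
  rw [hu]
  exact Submodule.sum_mem _ (fun i _ => W.smul_mem _ (hall i))

lemma xiSL_isOfFinOrder {n : ℕ} (hn : n ≠ 0) : IsOfFinOrder (xiSL n) := by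
  rw [isOfFinOrder_iff_pow_eq_one]
  refine ⟨n, Nat.pos_of_ne_zero hn, Subtype.ext ?_⟩
  rw [xiSL_pow_coe hn, xi_pow_self n hn, one_smul]
  simp

lemma finite_centerSL {n : ℕ} (hn : n ≠ 0) : Finite (centerSL n) := by
  have h := finite_zpowers.mpr (xiSL_isOfFinOrder hn)
  exact h.to_subtype

lemma finite_HS : Finite (HS e) := by
  haveI := finiteDual B
  haveI : Finite (centerSL n) := finite_centerSL (npos e).ne'
  have hmem : ∀ h : (repHom e).ker, ((h : HS e) : SLC n) ∈ centerSL n := by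
    intro h
    apply (mem_centerSL_iff (npos e).ne').mpr
    exact (repHom_eq_one_iff e _).mp (MonoidHom.mem_ker.mp h.2)
  haveI : Finite ((repHom e).ker) :=
    Finite.of_injective (fun h => (⟨((h : HS e) : SLC n), hmem h⟩ : centerSL n))
      (fun a b hab => Subtype.ext (Subtype.ext (Subtype.mk_eq_mk.mp hab)))
  haveI : Finite (↥(HS e) ⧸ (repHom e).ker) := by
    have eq1 := (QuotientGroup.quotientKerEquivOfSurjective (H := B × (B →* ℂˣ)) (repHom e)
      (repHom_surjective e)).toEquiv
    exact Finite.of_equiv (B × (B →* ℂˣ)) eq1.symm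
  have eq2 : ↥(HS e) ≃ (↥(HS e) ⧸ (repHom e).ker) × ↥((repHom e).ker) :=
    Subgroup.groupEquivQuotientProdSubgroup
  exact Finite.of_equiv _ eq2.symm

lemma exists_HS_elt (b : B) (χ : B →* ℂˣ) : ∃ (h : SLC n) (c : ℂ), h ∈ HS e ∧ c ≠ 0 ∧
    (h : Matrix (Fin n) (Fin n) ℂ) = c • (P e b * M e χ) := by
  obtain ⟨c, hcpow⟩ := IsAlgClosed.exists_pow_nat_eq ((P e b * M e χ).det)⁻¹ (npos e)
  have hdet : (c • (P e b * M e χ)).det = 1 := by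
    rw [Matrix.det_smul, Fintype.card_fin, hcpow, inv_mul_cancel₀ (det_PM_ne_zero e b χ)]
  exact ⟨⟨_, hdet⟩, c, ⟨c, b, χ, rfl⟩, coeff_ne_zero e (g := ⟨_, hdet⟩) rfl, rfl⟩

lemma scalar_eq_in_quot {n : ℕ} (hn : n ≠ 0) {x y : SLC n} (c : ℂ)
    (hc : (x : Matrix (Fin n) (Fin n) ℂ) = c • (y : Matrix (Fin n) (Fin n) ℂ)) :
    pin n x = pin n y := by
  have hdx : ((x : Matrix (Fin n) (Fin n) ℂ)).det = 1 := x.2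
  have hdy : ((y : Matrix (Fin n) (Fin n) ℂ)).det = 1 := y.2
  have hcn : c ^ n = 1 := by
    rw [hc, Matrix.det_smul, Fintype.card_fin, hdy, mul_one] at hdx
    exact hdx
  have hdz : ((c • 1 : Matrix (Fin n) (Fin n) ℂ)).det = 1 := by
    rw [Matrix.det_smul, Matrix.det_one, Fintype.card_fin, mul_one]
    exact hcn
  set z : SLC n := ⟨c • 1, hdz⟩ with hzdef
  have hz : z ∈ centerSL n := (mem_centerSL_iff hn).mpr ⟨c, rfl⟩
  have heq : y * z = x := by
    apply Subtype.ext
    rw [Matrix.SpecialLinearGroup.coe_mul, hc]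
    show (y : Matrix (Fin n) (Fin n) ℂ) * (c • 1) = _
    rw [Matrix.mul_smul, mul_one]
  exact ((QuotientGroup.mk'_eq_mk' (centerSL n)).mpr ⟨z, hz, heq⟩).symm

lemma mul_P_entry (A : Matrix (Fin n) (Fin n) ℂ) (b : B) (i j : Fin n) :
    (A * P e b) i j = A i (e.symm (b * e j)) := by
  simp only [Matrix.mul_apply, P, Matrix.of_apply]
  rw [Finset.sum_eq_single (e.symm (b * e j))]
  · rw [if_pos (e.apply_symm_apply _), mul_one]
  · intro k _ hk
    rw [if_neg, mul_zero]
    intro hcon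
    exact hk (by rw [← hcon, e.symm_apply_apply])
  · simp

lemma P_mul_entry (A : Matrix (Fin n) (Fin n) ℂ) (b : B) (i j : Fin n) :
    (P e b * A) i j = A (e.symm (b⁻¹ * e i)) j := by
  simp only [Matrix.mul_apply, P, Matrix.of_apply]
  rw [Finset.sum_eq_single (e.symm (b⁻¹ * e i))]
  · rw [if_pos (by rw [e.apply_symm_apply, mul_inv_cancel_left]), one_mul]
  · intro k _ hk
    rw [if_neg, zero_mul]
    intro hcon
    exact hk (by rw [hcon, inv_mul_cancel_left, e.symm_apply_apply])
  · simp

/-- Any element of `SL(n,ℂ)` commuting projectively with all `P b` and `M χ`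
lies in `HS e`. -/
lemma form_of_commuting (g : SLC n)
    (hM : ∀ χ : B →* ℂˣ, ∃ z : ℂ, (g : Matrix (Fin n) (Fin n) ℂ) * M e χ
        = z • (M e χ * (g : Matrix (Fin n) (Fin n) ℂ)))
    (hP : ∀ b : B, ∃ z : ℂ, (g : Matrix (Fin n) (Fin n) ℂ) * P e b
        = z • (P e b * (g : Matrix (Fin n) (Fin n) ℂ))) :
    g ∈ HS e := by
  set γ : Matrix (Fin n) (Fin n) ℂ := (g : Matrix (Fin n) (Fin n) ℂ) with hγ
  have hcol : ∀ j, ∃ i, γ i j ≠ 0 := by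
    intro j
    by_contra hcon
    push_neg at hcon
    have h1 : ((g⁻¹ : SLC n) : Matrix (Fin n) (Fin n) ℂ) * γ = 1 := by
      rw [hγ, ← Matrix.SpecialLinearGroup.coe_mul, inv_mul_cancel]
      simp
    have h2 := congrFun (congrFun h1 j) j
    rw [Matrix.mul_apply] at h2
    simp only [hcon, mul_zero, Finset.sum_const_zero] at h2
    rw [Matrix.one_apply_eq] at h2
    exact one_ne_zero h2.symm
  have hvalχ : ∀ (χ : B →* ℂˣ) (z : ℂ),
      γ * M e χ = z • (M e χ * γ) → ∀ j i0, γ i0 j ≠ 0 →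
      (χ (e j) : ℂ) = z * (χ (e i0) : ℂ) := by
    intro χ z hz j i0 hi0
    have h3 := congrFun (congrFun hz i0) j
    simp only [M, Matrix.mul_diagonal, Matrix.diagonal_mul, Matrix.smul_apply,
      smul_eq_mul] at h3
    have h4 : γ i0 j * (χ (e j) : ℂ) = γ i0 j * (z * (χ (e i0) : ℂ)) := by
      rw [h3]; ring
    exact mul_left_cancel₀ hi0 h4
  have huniq : ∀ j i i', γ i j ≠ 0 → γ i' j ≠ 0 → i = i' := by
    intro j i i' hi hi'
    have hee : e i = e i' := by
      apply sep
      intro χ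
      obtain ⟨z, hz⟩ := hM χ
      have e1 := hvalχ χ z hz j i hi
      have e2 := hvalχ χ z hz j i' hi'
      have hzne : z ≠ 0 := by
        intro h0
        rw [h0, zero_mul] at e1
        exact (χ (e j)).ne_zero e1
      apply Units.ext
      exact mul_left_cancel₀ hzne (e1.symm.trans e2)
    exact e.injective hee
  choose σ hσ using hcol
  have hzero : ∀ j i, i ≠ σ j → γ i j = 0 := by
    intro j i hi
    by_contra h0
    exact hi (huniq j i (σ j) h0 (hσ j))
  choose w hw using hP
  have hrel : ∀ b i j, γ i (e.symm (b * e j)) = w b * γ (e.symm (b⁻¹ * e i)) j := by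
    intro b i j
    have h3 := congrFun (congrFun (hw b) i) j
    rwa [mul_P_entry, Matrix.smul_apply, P_mul_entry, smul_eq_mul] at h3
  have hwne : ∀ b, w b ≠ 0 := by
    intro b
    have hdp : (P e b).det ≠ 0 := by
      have h0 := det_PM_ne_zero e b 1
      rwa [M_one, mul_one] at h0
    have h3 := congrArg Matrix.det (hw b)
    rw [Matrix.det_mul, Matrix.det_smul, Fintype.card_fin, Matrix.det_mul,
      (g.2 : γ.det = 1), one_mul, mul_one] at h3
    have h4 : (w b) ^ n = 1 := by
      have h5 : (w b) ^ n * (P e b).det = 1 * (P e b).det := by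
        rw [one_mul]
        exact h3.symm
      exact mul_right_cancel₀ hdp h5
    intro h0
    rw [h0, zero_pow (npos e).ne'] at h4
    exact zero_ne_one h4
  have hσtrans : ∀ b j, σ (e.symm (b * e j)) = e.symm (b * e (σ j)) := by
    intro b j
    have h4 : γ (e.symm (b * e (σ j))) (e.symm (b * e j)) ≠ 0 := by
      rw [hrel b, e.apply_symm_apply, inv_mul_cancel_left, e.symm_apply_apply]
      exact mul_ne_zero (hwne b) (hσ j)
    exact (huniq _ _ _ h4 (hσ _)).symm
  set t : Fin n → ℂ := fun j => γ (σ j) j with ht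
  have htne : ∀ j, t j ≠ 0 := hσ
  have htrel : ∀ b j, t (e.symm (b * e j)) = w b * t j := by
    intro b j
    show γ (σ (e.symm (b * e j))) (e.symm (b * e j)) = w b * γ (σ j) j
    rw [hσtrans b j, hrel b, e.apply_symm_apply, inv_mul_cancel_left, e.symm_apply_apply]
  set j₁ : Fin n := e.symm (1 : B) with hj₁
  set a : B := e (σ j₁) with ha
  have hwt : ∀ b, w b = t (e.symm b) / t j₁ := by
    intro b
    have h5 := htrel b j₁
    rw [hj₁, e.apply_symm_apply, mul_one] at h5
    rw [eq_div_iff (htne j₁)]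
    exact h5.symm
  have hmulrel : ∀ x y : B, t (e.symm (x * y)) * t j₁ = t (e.symm x) * t (e.symm y) := by
    intro x y
    have h5 := htrel x (e.symm y)
    rw [e.apply_symm_apply] at h5
    rw [h5, hwt x]
    field_simp
    rw [mul_assoc, mul_left_comm, mul_div_cancel_left₀ _ (htne j₁)]
  set χ₀ : B →* ℂˣ := MonoidHom.mk' (fun x => Units.mk0 (t (e.symm x) * (t j₁)⁻¹)
      (mul_ne_zero (htne _) (inv_ne_zero (htne _)))) (by
    intro x y
    apply Units.ext
    simp only [Units.val_mk0, Units.val_mul]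
    have h6 : t (e.symm (x * y)) = t (e.symm x) * t (e.symm y) / t j₁ := by
      rw [eq_div_iff (htne j₁)]
      exact hmulrel x y
    rw [h6]
    field_simp) with hχ₀
  have hσa : ∀ j, σ j = e.symm (a * e j) := by
    intro j
    have h6 := hσtrans (e j) j₁
    rw [hj₁, e.apply_symm_apply, mul_one, e.symm_apply_apply] at h6
    rw [h6, mul_comm]
  refine ⟨t j₁, a, χ₀, ?_⟩
  funext i j
  rw [show (t j₁ • (P e a * M e χ₀)) i j
      = if e i = a * e j then t j₁ * ((χ₀ (e j) : ℂˣ) : ℂ) else 0 from entry_eq e _ _ _ i j]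
  by_cases h : e i = a * e j
  · rw [if_pos h]
    have hij : i = σ j := by
      rw [hσa j, ← h, e.symm_apply_apply]
    have hχval : ((χ₀ (e j) : ℂˣ) : ℂ) = t j * (t j₁)⁻¹ := by
      rw [hχ₀]
      simp only [MonoidHom.mk'_apply, Units.val_mk0, e.symm_apply_apply]
    rw [hij, hχval]
    show t j = t j₁ * (t j * (t j₁)⁻¹)
    rw [← mul_assoc, mul_comm (t j₁) (t j), mul_assoc, mul_inv_cancel₀ (htne j₁), mul_one]
  · rw [if_neg h]
    apply hzero
    intro hcon
    apply h
    rw [hσa] at hcon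
    exact e.eq_symm_apply.mp hcon

lemma Zc_eq : Zc n (HS e) = (HS e).map (pin n) := by
  apply le_antisymm
  · intro x hx
    obtain ⟨g, hg⟩ := QuotientGroup.mk'_surjective (centerSL n) x
    have hcomm : ∀ h : SLC n, h ∈ HS e → ∃ c : ℂ,
        (g : Matrix (Fin n) (Fin n) ℂ) * (h : Matrix (Fin n) (Fin n) ℂ)
          = c • ((h : Matrix (Fin n) (Fin n) ℂ) * (g : Matrix (Fin n) (Fin n) ℂ)) := by
      intro h hh
      have h1 : pin n h * x = x * pin n h :=
        Subgroup.mem_centralizer_iff.mp hx (pin n h) (Subgroup.mem_map.mpr ⟨h, hh, rfl⟩)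
      rw [← hg] at h1
      have h2 : pin n (h * g) = pin n (g * h) := by
        rw [_root_.map_mul, _root_.map_mul]
        exact h1
      obtain ⟨z, hz, hzeq⟩ := (QuotientGroup.mk'_eq_mk' (centerSL n)).mp h2
      obtain ⟨c, hc⟩ := (mem_centerSL_iff (npos e).ne').mp hz
      refine ⟨c, ?_⟩
      have h3 := congrArg Subtype.val hzeq
      rw [Matrix.SpecialLinearGroup.coe_mul, Matrix.SpecialLinearGroup.coe_mul,
        Matrix.SpecialLinearGroup.coe_mul, hc, Matrix.mul_smul, mul_one] at h3
      exact h3.symm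
    have hg_mem : g ∈ HS e := by
      apply form_of_commuting e g
      · intro χ
        obtain ⟨h, c0, hmem, hc0, hval⟩ := exists_HS_elt e 1 χ
        rw [P_one, one_mul] at hval
        obtain ⟨z, hz⟩ := hcomm h hmem
        rw [hval, Matrix.mul_smul, Matrix.smul_mul, smul_comm z c0] at hz
        exact ⟨z, smul_right_injective _ hc0 hz⟩
      · intro b
        obtain ⟨h, c0, hmem, hc0, hval⟩ := exists_HS_elt e b 1
        rw [M_one, mul_one] at hval
        obtain ⟨z, hz⟩ := hcomm h hmem
        rw [hval, Matrix.mul_smul, Matrix.smul_mul, smul_comm z c0] at hz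
        exact ⟨z, smul_right_injective _ hc0 hz⟩
    exact Subgroup.mem_map.mpr ⟨g, hg_mem, hg⟩
  · intro x hx
    obtain ⟨h, hh, rfl⟩ := Subgroup.mem_map.mp hx
    apply Subgroup.mem_centralizer_iff.mpr
    rintro m hm
    obtain ⟨h', hh', rfl⟩ := Subgroup.mem_map.mp hm
    show pin n h' * pin n h = pin n h * pin n h'
    rw [← _root_.map_mul, ← _root_.map_mul]
    obtain ⟨c, b, χ, hc⟩ := hh
    obtain ⟨c', b', χ', hc'⟩ := hh'
    apply scalar_eq_in_quot (npos e).ne' ((χ' b : ℂ) * ((χ b' : ℂ))⁻¹)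
    rw [Matrix.SpecialLinearGroup.coe_mul, Matrix.SpecialLinearGroup.coe_mul,
      hc, hc', key_mul, key_mul, smul_smul]
    rw [mul_comm b b', mul_comm χ χ']
    congr 1
    have hne : ((χ b' : ℂ)) ≠ 0 := (χ b').ne_zero
    field_simp

set_option maxHeartbeats 1000000 in
/-- The centralizer is isomorphic to `B × B`. -/
lemma Zc_iso : Nonempty (Zc n (HS e) ≃* B × B) := by
  haveI : Finite B := Finite.of_fintype B
  set φ : ↥(HS e) →* PSLC n := (pin n).comp (HS e).subtype with hφ
  have hrange : φ.range = (HS e).map (pin n) := by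
    ext x
    constructor
    · rintro ⟨h, rfl⟩
      exact Subgroup.mem_map.mpr ⟨(h : SLC n), h.2, rfl⟩
    · rintro hx
      obtain ⟨gg, hgg, rfl⟩ := Subgroup.mem_map.mp hx
      exact ⟨⟨gg, hgg⟩, rfl⟩
  have hker : φ.ker = (repHom e).ker := by
    ext h
    rw [MonoidHom.mem_ker, MonoidHom.mem_ker]
    have h1 : φ h = pin n (h : SLC n) := rfl
    rw [h1, show (pin n ((h : SLC n)) = 1) ↔ (((h : SLC n)) ∈ centerSL n) from
      QuotientGroup.eq_one_iff _]
    rw [mem_centerSL_iff (npos e).ne', repHom_eq_one_iff]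
  have e1 : Zc n (HS e) ≃* φ.range := MulEquiv.subgroupCongr ((Zc_eq e).trans hrange.symm)
  have e2 := (QuotientGroup.quotientKerEquivRange φ).symm
  have e3 := QuotientGroup.quotientMulEquivOfEq hker
  have e4 := QuotientGroup.quotientKerEquivOfSurjective (H := B × (B →* ℂˣ)) (repHom e) (repHom_surjective e)
  obtain ⟨e5⟩ := dualEquiv B
  have e6 : (B × (B →* ℂˣ)) ≃* (B × B) :=
    { toFun := fun p => (p.1, e5 p.2)
      invFun := fun p => (p.1, e5.symm p.2)
      left_inv := fun p => by simp
      right_inv := fun p => by simp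
      map_mul' := fun p q => by
        refine Prod.ext rfl ?_
        exact map_mul e5 _ _ }
  exact ⟨MulEquiv.trans (((e1.trans e2).trans e3).trans e4) e6⟩

end Prop34

/-- Proposition 3.4: for every abelian group `B` of order `n` there is a finite irreducible
subgroup `H ≤ SL(n,ℂ)` with `Z_n(H) ≅ B × B`. -/
theorem stmt10 (n : ℕ) (hn : 1 ≤ n) (B : Type*) [CommGroup B] (hB : Nat.card B = n) :
    ∃ H : Subgroup (SLC n), Finite H ∧ IsIrreducibleSL n H ∧
      Nonempty (Zc n H ≃* B × B) := by
  have hn0 : n ≠ 0 := Nat.one_le_iff_ne_zero.mp hn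
  haveI : Finite B := Nat.finite_of_card_ne_zero (by rw [hB]; exact hn0)
  haveI := Fintype.ofFinite B
  haveI := Classical.decEq B
  have hcard : Fintype.card B = n := by rw [← Nat.card_eq_fintype_card, hB]
  let e : Fin n ≃ B := (Fintype.equivFinOfCardEq hcard).symm
  exact ⟨Prop34.HS e, Prop34.finite_HS e, Prop34.HS_irreducible e, Prop34.Zc_iso e⟩
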